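/- Main theorem (action-distribution-independent case): Under the same setup as the general main theorem but with r(x,u,μ) and P(x,u,μ) independent of the population action distribution, the approximation bound improves to |v_MARL(x₀^N, π*_MARL) − v_MARL(x₀^N, π̃*_MF)| ≤ (2/(1−γ)) M_R/√N + (√(|X|)/√N) · (4 S_R/(S_P−1)) · (1/(1−γS_P) − 1/(1−γ)), whenever γ S_P < 1, with S_R = (M_R+2L_R)+L_Q(M_R+L_R) and S_P = (1+2L_P)+L_Q(1+L_P). -/
import Mathlib
set_option linter.unusedSectionVars false
set_option maxHeartbeats 2000000

open Finset

section PiSums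

variable {I B C : Type*} [Fintype I] [DecidableEq I] [Fintype B] [Fintype C]

lemma prod_ite_two {M : Type*} [CommMonoid M] {i j : I} (hij : i ≠ j) (A B : I → M) :
    (∏ k, if k = i then A k else if k = j then B k else 1) = A i * B j := by
  have : ∀ k, (if k = i then A k else if k = j then B k else 1)
      = (if k = i then A k else 1) * (if k = j then B k else 1) := by
    intro k
    by_cases h1 : k = i
    · subst h1
      rw [if_pos rfl, if_pos rfl, if_neg hij, mul_one]
    · rw [if_neg h1, if_neg h1, one_mul]
  simp_rw [this, Finset.prod_mul_distrib, Finset.prod_ite_eq' univ i A,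
    Finset.prod_ite_eq' univ j B, if_pos (mem_univ i), if_pos (mem_univ j)]

lemma sum_pi_prod (h : I → B → ℝ) :
    ∑ f : I → B, ∏ i, h i (f i) = ∏ i, ∑ b, h i b := by
  rw [eq_comm, Finset.prod_univ_sum (fun _ => (univ : Finset B)) h, Fintype.piFinset_univ]

lemma sum_pi_prod_one (h : I → B → ℝ) (h1 : ∀ i, ∑ b, h i b = 1) (i : I) (g : B → ℝ) :
    ∑ f : I → B, (∏ j, h j (f j)) * g (f i) = ∑ b, h i b * g b := by
  have key : ∀ f : I → B, (∏ j, h j (f j)) * g (f i)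
      = ∏ j, (h j (f j) * if j = i then g (f j) else 1) := by
    intro f
    rw [Finset.prod_mul_distrib, Finset.prod_ite_eq' univ i (fun j => g (f j)),
      if_pos (mem_univ i)]
  simp_rw [key]
  rw [sum_pi_prod (fun j b => h j b * if j = i then g b else 1)]
  have h2 : ∀ j, (∑ b, h j b * if j = i then g b else 1) = if j = i then ∑ b, h j b * g b else 1 := by
    intro j
    by_cases hj : j = i <;> simp [hj, h1 j]
  simp_rw [h2]
  rw [Finset.prod_ite_eq' univ i _, if_pos (mem_univ i)]

lemma sum_pi2_prod (h : I → B → C → ℝ) :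
    ∑ a : I → B, ∑ c : I → C, ∏ k, h k (a k) (c k) = ∏ k, ∑ b, ∑ y, h k b y := by
  have h1 : ∀ a : I → B, ∑ c : I → C, ∏ k, h k (a k) (c k) = ∏ k, ∑ y, h k (a k) y :=
    fun a => sum_pi_prod (fun k y => h k (a k) y)
  simp_rw [h1]
  exact sum_pi_prod (fun k b => ∑ y, h k b y)

lemma sum_pi2_one (h : I → B → C → ℝ) (h1 : ∀ k, ∑ b, ∑ y, h k b y = 1) (i : I) (g : C → ℝ) :
    ∑ a : I → B, ∑ c : I → C, (∏ k, h k (a k) (c k)) * g (c i) = ∑ b, ∑ y, h i b y * g y := by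
  have key : ∀ (a : I → B) (c : I → C), (∏ k, h k (a k) (c k)) * g (c i)
      = ∏ k, (h k (a k) (c k) * if k = i then g (c k) else 1) := by
    intro a c
    rw [Finset.prod_mul_distrib, Finset.prod_ite_eq' univ i (fun k => g (c k)),
      if_pos (mem_univ i)]
  simp_rw [key]
  rw [sum_pi2_prod (fun k b y => h k b y * if k = i then g y else 1)]
  have h2 : ∀ k, (∑ b, ∑ y, h k b y * if k = i then g y else 1)
      = if k = i then ∑ b, ∑ y, h k b y * g y else 1 := by
    intro k
    by_cases hk : k = i <;> simp [hk, h1 k]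
  simp_rw [h2]
  rw [Finset.prod_ite_eq' univ i _, if_pos (mem_univ i)]

lemma sum_pi2_two (h : I → B → C → ℝ) (h1 : ∀ k, ∑ b, ∑ y, h k b y = 1) {i j : I}
    (hij : i ≠ j) (g₁ g₂ : C → ℝ) :
    ∑ a : I → B, ∑ c : I → C, (∏ k, h k (a k) (c k)) * (g₁ (c i) * g₂ (c j))
      = (∑ b, ∑ y, h i b y * g₁ y) * (∑ b, ∑ y, h j b y * g₂ y) := by
  have key : ∀ (a : I → B) (c : I → C), (∏ k, h k (a k) (c k)) * (g₁ (c i) * g₂ (c j))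
      = ∏ k, (h k (a k) (c k) *
          if k = i then g₁ (c k) else if k = j then g₂ (c k) else 1) := by
    intro a c
    rw [Finset.prod_mul_distrib, prod_ite_two hij (fun k => g₁ (c k)) (fun k => g₂ (c k))]
  simp_rw [key]
  rw [sum_pi2_prod (fun k b y => h k b y *
    if k = i then g₁ y else if k = j then g₂ y else 1)]
  have h2 : ∀ k, (∑ b, ∑ y, h k b y * if k = i then g₁ y else if k = j then g₂ y else 1)
      = if k = i then (∑ b, ∑ y, h k b y * g₁ y)
        else if k = j then (∑ b, ∑ y, h k b y * g₂ y) else 1 := by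
    intro k
    by_cases hk : k = i
    · simp [hk]
    · by_cases hk' : k = j <;> simp [hk, hk', h1 k]
  simp_rw [h2]
  exact prod_ite_two hij _ _

lemma jensen_abs {ι : Type*} [Fintype ι] (w f : ι → ℝ) (hw0 : ∀ i, 0 ≤ w i)
    (hw1 : ∑ i, w i = 1) :
    ∑ i, w i * |f i| ≤ Real.sqrt (∑ i, w i * f i ^ 2) := by
  have h := Finset.sum_mul_sq_le_sq_mul_sq univ (fun i => Real.sqrt (w i))
    (fun i => Real.sqrt (w i) * |f i|)
  have e1 : ∀ i : ι, Real.sqrt (w i) * (Real.sqrt (w i) * |f i|) = w i * |f i| := by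
    intro i; rw [← mul_assoc, Real.mul_self_sqrt (hw0 i)]
  have e2 : ∀ i : ι, Real.sqrt (w i) ^ 2 = w i := fun i => Real.sq_sqrt (hw0 i)
  have e3 : ∀ i : ι, (Real.sqrt (w i) * |f i|) ^ 2 = w i * f i ^ 2 := by
    intro i; rw [mul_pow, Real.sq_sqrt (hw0 i), sq_abs]
  simp_rw [e1, e2, e3, hw1, one_mul] at h
  have h4 : (0:ℝ) ≤ ∑ i, w i * |f i| :=
    Finset.sum_nonneg fun i _ => mul_nonneg (hw0 i) (abs_nonneg _)
  calc ∑ i, w i * |f i| = Real.sqrt ((∑ i, w i * |f i|) ^ 2) := (Real.sqrt_sq h4).symm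
    _ ≤ Real.sqrt (∑ i, w i * f i ^ 2) := Real.sqrt_le_sqrt h

lemma sum_sqrt_le {ι : Type*} [Fintype ι] (v : ι → ℝ) (hv : ∀ i, 0 ≤ v i) :
    ∑ i, Real.sqrt (v i) ≤ Real.sqrt (Fintype.card ι) * Real.sqrt (∑ i, v i) := by
  have h := Finset.sum_mul_sq_le_sq_mul_sq univ (fun _ : ι => (1:ℝ)) (fun i => Real.sqrt (v i))
  simp only [one_mul, one_pow, Finset.sum_const, card_univ, nsmul_eq_mul, mul_one] at h
  have h4 : (0:ℝ) ≤ ∑ i, Real.sqrt (v i) := Finset.sum_nonneg fun i _ => Real.sqrt_nonneg _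
  calc ∑ i, Real.sqrt (v i) = Real.sqrt ((∑ i, Real.sqrt (v i)) ^ 2) := (Real.sqrt_sq h4).symm
    _ ≤ Real.sqrt ((Fintype.card ι : ℝ) * ∑ i, v i) := by
        apply Real.sqrt_le_sqrt
        calc (∑ i, Real.sqrt (v i)) ^ 2 ≤ (Fintype.card ι : ℝ) * ∑ i, Real.sqrt (v i) ^ 2 := h
          _ ≤ (Fintype.card ι : ℝ) * ∑ i, v i := by
              gcongr with i _
              rw [Real.sq_sqrt (hv i)]
    _ = Real.sqrt (Fintype.card ι) * Real.sqrt (∑ i, v i) := Real.sqrt_mul (by positivity) _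

end PiSums

def IsPmf {X : Type*} [Fintype X] (μ : X → ℝ) : Prop :=
  (∀ x, 0 ≤ μ x) ∧ ∑ x, μ x = 1

noncomputable def l1 {X : Type*} [Fintype X] (f : X → ℝ) : ℝ := ∑ x, |f x|

/-- Empirical distribution of a configuration of `N` agents. -/
noncomputable def emp {X : Type*} [Fintype X] [DecidableEq X] {N : ℕ}
    (s : Fin N → X) : X → ℝ :=
  fun x => (∑ i, if s i = x then (1 : ℝ) else 0) / N

/-- Mean-field state update (action-distribution-independent kernel). -/
noncomputable def PMFind {X U : Type*} [Fintype X] [Fintype U]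
    (P : X → U → (X → ℝ) → X → ℝ)
    (μ : X → ℝ) (π : X → (X → ℝ) → U → ℝ) : X → ℝ :=
  fun y => ∑ x, ∑ u, P x u μ y * π x μ u * μ x

/-- Mean-field average reward (action-distribution-independent reward). -/
noncomputable def rMFind {X U : Type*} [Fintype X] [Fintype U]
    (r : X → U → (X → ℝ) → ℝ)
    (μ : X → ℝ) (π : X → (X → ℝ) → U → ℝ) : ℝ :=
  ∑ x, ∑ u, r x u μ * π x μ u * μ x

/-- Law of the `N`-agent joint-state process at time `t` (action-independent kernel),
started from the deterministic joint state `x₀`. -/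
noncomputable def Wprocind {X U : Type*} [Fintype X] [Fintype U] [DecidableEq X] [DecidableEq U]
    {N : ℕ} (P : X → U → (X → ℝ) → X → ℝ)
    (π : ℕ → X → (X → ℝ) → U → ℝ) (x₀ : Fin N → X) : ℕ → (Fin N → X) → ℝ
  | 0 => fun s => if s = x₀ then 1 else 0
  | t + 1 => fun s' => ∑ s : Fin N → X, Wprocind P π x₀ t s *
      ∑ a : Fin N → U, (∏ i, π t (s i) (emp s) (a i)) *
        ∏ i, P (s i) (a i) (emp s) (s' i)

/-- The `N`-agent discounted value (action-distribution-independent model). -/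
noncomputable def vMARLind {X U : Type*} [Fintype X] [Fintype U] [DecidableEq X] [DecidableEq U]
    {N : ℕ} (γ : ℝ) (r : X → U → (X → ℝ) → ℝ)
    (P : X → U → (X → ℝ) → X → ℝ)
    (π : ℕ → X → (X → ℝ) → U → ℝ) (x₀ : Fin N → X) : ℝ :=
  ∑' t : ℕ, γ ^ t * ∑ s : Fin N → X, Wprocind P π x₀ t s *
    ∑ a : Fin N → U, (∏ i, π t (s i) (emp s) (a i)) *
      ((1 / N : ℝ) * ∑ i, r (s i) (a i) (emp s))

/-- Deterministic mean-field flow (action-independent kernel). -/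
noncomputable def muFlowind {X U : Type*} [Fintype X] [Fintype U]
    (P : X → U → (X → ℝ) → X → ℝ)
    (π : ℕ → X → (X → ℝ) → U → ℝ) (μ₀ : X → ℝ) : ℕ → X → ℝ
  | 0 => μ₀
  | t + 1 => PMFind P (muFlowind P π μ₀ t) (π t)

/-- The mean-field discounted value (action-distribution-independent model). -/
noncomputable def vMFind {X U : Type*} [Fintype X] [Fintype U]
    (γ : ℝ) (r : X → U → (X → ℝ) → ℝ)
    (P : X → U → (X → ℝ) → X → ℝ)
    (π : ℕ → X → (X → ℝ) → U → ℝ) (μ₀ : X → ℝ) : ℝ :=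
  ∑' t : ℕ, γ ^ t * rMFind r (muFlowind P π μ₀ t) (π t)


section Model

variable {X U : Type*} [Fintype X] [Fintype U] [DecidableEq X] [DecidableEq U]

lemma l1_nonneg (f : X → ℝ) : 0 ≤ l1 f := Finset.sum_nonneg fun _ _ => abs_nonneg _

lemma l1_triangle (a b c : X → ℝ) :
    l1 (fun x => a x - c x) ≤ l1 (fun x => a x - b x) + l1 (fun x => b x - c x) := by
  unfold l1
  rw [← Finset.sum_add_distrib]
  apply Finset.sum_le_sum
  intro x _
  calc |a x - c x| = |(a x - b x) + (b x - c x)| := by ring_nf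
    _ ≤ |a x - b x| + |b x - c x| := abs_add_le _ _

lemma emp_isPmf {N : ℕ} (hN : 0 < N) (s : Fin N → X) : IsPmf (emp s) := by
  constructor
  · intro x
    apply div_nonneg _ (by positivity)
    exact Finset.sum_nonneg fun i _ => by positivity
  · unfold emp
    rw [← Finset.sum_div, Finset.sum_comm]
    simp only [Finset.sum_ite_eq, mem_univ, if_pos]
    simp only [Finset.sum_const, card_univ, Fintype.card_fin, nsmul_eq_mul, mul_one]
    field_simp

lemma emp_weighted {N : ℕ} (s : Fin N → X) (g : X → ℝ) :
    ∑ x, emp s x * g x = (1 / N : ℝ) * ∑ i, g (s i) := by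
  unfold emp
  simp only [div_mul_eq_mul_div]
  rw [← Finset.sum_div]
  have key : ∑ x, (∑ i, if s i = x then (1:ℝ) else 0) * g x = ∑ i, g (s i) := by
    simp_rw [Finset.sum_mul]
    rw [Finset.sum_comm]
    apply Finset.sum_congr rfl
    intro i _
    simp only [ite_mul, one_mul, zero_mul, Finset.sum_ite_eq, mem_univ, if_pos]
  rw [key]
  ring

lemma PMFind_isPmf (P : X → U → (X → ℝ) → X → ℝ) (μ : X → ℝ) (π₀ : X → (X → ℝ) → U → ℝ)
    (hμ : IsPmf μ) (hπ : ∀ x, IsPmf (π₀ x μ)) (hP : ∀ x u, IsPmf (P x u μ)) :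
    IsPmf (PMFind P μ π₀) := by
  constructor
  · intro y
    apply Finset.sum_nonneg; intro x _
    apply Finset.sum_nonneg; intro u _
    exact mul_nonneg (mul_nonneg ((hP x u).1 y) ((hπ x).1 u)) (hμ.1 x)
  · unfold PMFind
    rw [Finset.sum_comm]
    have : ∀ x, ∑ y, ∑ u, P x u μ y * π₀ x μ u * μ x = μ x := by
      intro x
      rw [Finset.sum_comm]
      have : ∀ u, ∑ y, P x u μ y * π₀ x μ u * μ x = π₀ x μ u * μ x := by
        intro u
        rw [← Finset.sum_mul, ← Finset.sum_mul, (hP x u).2, one_mul]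
      simp_rw [this, ← Finset.sum_mul, (hπ x).2, one_mul]
    simp_rw [this, hμ.2]

lemma muFlow_isPmf (P : X → U → (X → ℝ) → X → ℝ) (π : ℕ → X → (X → ℝ) → U → ℝ)
    (μ₀ : X → ℝ) (hμ₀ : IsPmf μ₀)
    (hπ : ∀ t x μ, IsPmf μ → IsPmf (π t x μ))
    (hP : ∀ x u μ, IsPmf μ → IsPmf (P x u μ)) :
    ∀ t, IsPmf (muFlowind P π μ₀ t) := by
  intro t
  induction t with
  | zero => exact hμ₀
  | succ t ih =>
      show IsPmf (PMFind P (muFlowind P π μ₀ t) (π t))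
      exact PMFind_isPmf _ _ _ ih (fun x => hπ t x _ ih) (fun x u => hP x u _ ih)

lemma Wproc_nonneg {N : ℕ} (hN : 0 < N) (P : X → U → (X → ℝ) → X → ℝ)
    (π : ℕ → X → (X → ℝ) → U → ℝ) (x₀ : Fin N → X)
    (hπ : ∀ t x μ, IsPmf μ → IsPmf (π t x μ))
    (hP : ∀ x u μ, IsPmf μ → IsPmf (P x u μ)) :
    ∀ t s, 0 ≤ Wprocind P π x₀ t s := by
  intro t
  induction t with
  | zero => intro s; simp only [Wprocind]; positivity
  | succ t ih =>
      intro s'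
      simp only [Wprocind]
      apply Finset.sum_nonneg; intro s _
      apply mul_nonneg (ih s)
      apply Finset.sum_nonneg; intro a _
      apply mul_nonneg
      · exact Finset.prod_nonneg fun i _ => (hπ t (s i) _ (emp_isPmf hN s)).1 (a i)
      · exact Finset.prod_nonneg fun i _ => (hP (s i) (a i) _ (emp_isPmf hN s)).1 (s' i)

lemma Wproc_sum_one {N : ℕ} (hN : 0 < N) (P : X → U → (X → ℝ) → X → ℝ)
    (π : ℕ → X → (X → ℝ) → U → ℝ) (x₀ : Fin N → X)
    (hπ : ∀ t x μ, IsPmf μ → IsPmf (π t x μ))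
    (hP : ∀ x u μ, IsPmf μ → IsPmf (P x u μ)) :
    ∀ t, ∑ s, Wprocind P π x₀ t s = 1 := by
  intro t
  induction t with
  | zero => simp [Wprocind]
  | succ t ih =>
      simp only [Wprocind]
      rw [Finset.sum_comm]
      have key : ∀ s : Fin N → X, ∑ s' : Fin N → X, Wprocind P π x₀ t s *
          ∑ a : Fin N → U, (∏ i, π t (s i) (emp s) (a i)) *
            ∏ i, P (s i) (a i) (emp s) (s' i) = Wprocind P π x₀ t s := by
        intro s
        rw [← Finset.mul_sum]
        have : ∑ s' : Fin N → X, ∑ a : Fin N → U, (∏ i, π t (s i) (emp s) (a i)) *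
            ∏ i, P (s i) (a i) (emp s) (s' i) = 1 := by
          rw [Finset.sum_comm]
          have h1 : ∀ a : Fin N → U, ∑ s' : Fin N → X, (∏ i, π t (s i) (emp s) (a i)) *
              ∏ i, P (s i) (a i) (emp s) (s' i) = ∏ i, π t (s i) (emp s) (a i) := by
            intro a
            rw [← Finset.mul_sum, sum_pi_prod (fun i y => P (s i) (a i) (emp s) y)]
            have : ∀ i, ∑ y, P (s i) (a i) (emp s) y = 1 :=
              fun i => (hP (s i) (a i) _ (emp_isPmf hN s)).2
            simp [this]
          simp_rw [h1]
          rw [sum_pi_prod (fun i u => π t (s i) (emp s) u)]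
          have : ∀ i, ∑ u, π t (s i) (emp s) u = 1 :=
            fun i => (hπ t (s i) _ (emp_isPmf hN s)).2
          simp [this]
        rw [this, mul_one]
      simp_rw [key, ih]

end Model
section Lip

variable {X U : Type*} [Fintype X] [Fintype U] [DecidableEq X] [DecidableEq U]

lemma rMF_bound (M_R : ℝ) (r : X → U → (X → ℝ) → ℝ)
    (hbdd : ∀ x u μ, IsPmf μ → |r x u μ| ≤ M_R)
    (μ : X → ℝ) (hμ : IsPmf μ) (π₀ : X → (X → ℝ) → U → ℝ)
    (hπ : ∀ x, IsPmf (π₀ x μ)) :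
    |rMFind r μ π₀| ≤ M_R := by
  unfold rMFind
  calc |∑ x, ∑ u, r x u μ * π₀ x μ u * μ x|
      ≤ ∑ x, |∑ u, r x u μ * π₀ x μ u * μ x| := Finset.abs_sum_le_sum_abs _ _
    _ ≤ ∑ x, ∑ u, |r x u μ * π₀ x μ u * μ x| :=
        Finset.sum_le_sum fun x _ => Finset.abs_sum_le_sum_abs _ _
    _ ≤ ∑ x, ∑ u, M_R * (π₀ x μ u * μ x) := by
        apply Finset.sum_le_sum; intro x _; apply Finset.sum_le_sum; intro u _
        rw [mul_assoc, abs_mul, abs_of_nonneg (mul_nonneg ((hπ x).1 u) (hμ.1 x))]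
        exact mul_le_mul_of_nonneg_right (hbdd x u μ hμ) (mul_nonneg ((hπ x).1 u) (hμ.1 x))
    _ = M_R := by
        have h1 : ∀ x, ∑ u, M_R * (π₀ x μ u * μ x) = M_R * μ x := by
          intro x
          rw [← Finset.mul_sum, ← Finset.sum_mul, (hπ x).2, one_mul]
        simp_rw [h1, ← Finset.mul_sum, hμ.2, mul_one]

lemma rMF_lip (M_R L_R L_Q : ℝ) (hMR : 0 ≤ M_R) (r : X → U → (X → ℝ) → ℝ)
    (hbdd : ∀ x u μ, IsPmf μ → |r x u μ| ≤ M_R)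
    (hrLip : ∀ x u (μ₁ μ₂ : X → ℝ), IsPmf μ₁ → IsPmf μ₂ →
      |r x u μ₁ - r x u μ₂| ≤ L_R * l1 (fun x' => μ₁ x' - μ₂ x'))
    (π₀ : X → (X → ℝ) → U → ℝ) (μ₁ μ₂ : X → ℝ) (hμ₁ : IsPmf μ₁) (hμ₂ : IsPmf μ₂)
    (hπ₁ : ∀ x, IsPmf (π₀ x μ₁)) (hπ₂ : ∀ x, IsPmf (π₀ x μ₂))
    (hπLip : ∀ x, l1 (fun u => π₀ x μ₁ u - π₀ x μ₂ u) ≤ L_Q * l1 (fun x' => μ₁ x' - μ₂ x')) :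
    |rMFind r μ₁ π₀ - rMFind r μ₂ π₀|
      ≤ (L_R + M_R * L_Q + M_R) * l1 (fun x' => μ₁ x' - μ₂ x') := by
  set Δ := l1 (fun x' => μ₁ x' - μ₂ x') with hΔ
  have hΔ0 : 0 ≤ Δ := l1_nonneg _
  unfold rMFind
  rw [← Finset.sum_sub_distrib]
  simp_rw [← Finset.sum_sub_distrib]
  have pw : ∀ x u, |r x u μ₁ * π₀ x μ₁ u * μ₁ x - r x u μ₂ * π₀ x μ₂ u * μ₂ x|
      ≤ (L_R * Δ) * (π₀ x μ₁ u * μ₁ x)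
        + (M_R * μ₁ x) * |π₀ x μ₁ u - π₀ x μ₂ u|
        + (M_R * |μ₁ x - μ₂ x|) * π₀ x μ₂ u := by
    intro x u
    have e : r x u μ₁ * π₀ x μ₁ u * μ₁ x - r x u μ₂ * π₀ x μ₂ u * μ₂ x
        = (r x u μ₁ - r x u μ₂) * (π₀ x μ₁ u * μ₁ x)
          + (r x u μ₂ * μ₁ x) * (π₀ x μ₁ u - π₀ x μ₂ u)
          + (r x u μ₂ * π₀ x μ₂ u) * (μ₁ x - μ₂ x) := by ring
    rw [e]
    have hb1 : 0 ≤ π₀ x μ₁ u * μ₁ x := mul_nonneg ((hπ₁ x).1 u) (hμ₁.1 x)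
    calc |_ + _ + _| ≤ |(r x u μ₁ - r x u μ₂) * (π₀ x μ₁ u * μ₁ x)|
          + |(r x u μ₂ * μ₁ x) * (π₀ x μ₁ u - π₀ x μ₂ u)|
          + |(r x u μ₂ * π₀ x μ₂ u) * (μ₁ x - μ₂ x)| := by
          exact (abs_add_le _ _).trans (by gcongr; exact abs_add_le _ _)
      _ ≤ (L_R * Δ) * (π₀ x μ₁ u * μ₁ x)
          + (M_R * μ₁ x) * |π₀ x μ₁ u - π₀ x μ₂ u|
          + (M_R * |μ₁ x - μ₂ x|) * π₀ x μ₂ u := by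
          gcongr ?_ + ?_ + ?_
          · rw [abs_mul, abs_of_nonneg hb1]
            exact mul_le_mul_of_nonneg_right (hrLip x u μ₁ μ₂ hμ₁ hμ₂) hb1
          · rw [abs_mul]
            apply mul_le_mul_of_nonneg_right _ (abs_nonneg _)
            rw [abs_mul, abs_of_nonneg (hμ₁.1 x)]
            exact mul_le_mul_of_nonneg_right (hbdd x u μ₂ hμ₂) (hμ₁.1 x)
          · simp only [abs_mul, abs_of_nonneg ((hπ₂ x).1 u)]
            nlinarith [mul_le_mul_of_nonneg_right (mul_le_mul_of_nonneg_right
              (hbdd x u μ₂ hμ₂) (abs_nonneg (μ₁ x - μ₂ x))) ((hπ₂ x).1 u)]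
  calc |∑ x, ∑ u, (r x u μ₁ * π₀ x μ₁ u * μ₁ x - r x u μ₂ * π₀ x μ₂ u * μ₂ x)|
      ≤ ∑ x, |∑ u, (r x u μ₁ * π₀ x μ₁ u * μ₁ x - r x u μ₂ * π₀ x μ₂ u * μ₂ x)| :=
        Finset.abs_sum_le_sum_abs _ _
    _ ≤ ∑ x, ∑ u, |r x u μ₁ * π₀ x μ₁ u * μ₁ x - r x u μ₂ * π₀ x μ₂ u * μ₂ x| :=
        Finset.sum_le_sum fun x _ => Finset.abs_sum_le_sum_abs _ _
    _ ≤ ∑ x, ∑ u, ((L_R * Δ) * (π₀ x μ₁ u * μ₁ x)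
          + (M_R * μ₁ x) * |π₀ x μ₁ u - π₀ x μ₂ u|
          + (M_R * |μ₁ x - μ₂ x|) * π₀ x μ₂ u) :=
        Finset.sum_le_sum fun x _ => Finset.sum_le_sum fun u _ => pw x u
    _ = (∑ x, ∑ u, (L_R * Δ) * (π₀ x μ₁ u * μ₁ x))
          + (∑ x, ∑ u, (M_R * μ₁ x) * |π₀ x μ₁ u - π₀ x μ₂ u|)
          + (∑ x, ∑ u, (M_R * |μ₁ x - μ₂ x|) * π₀ x μ₂ u) := by
        simp_rw [Finset.sum_add_distrib]
    _ ≤ (L_R * Δ) + (M_R * L_Q * Δ) + (M_R * Δ) := by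
        gcongr ?_ + ?_ + ?_
        · have h1 : ∀ x, ∑ u, (L_R * Δ) * (π₀ x μ₁ u * μ₁ x) = (L_R * Δ) * μ₁ x := by
            intro x; rw [← Finset.mul_sum, ← Finset.sum_mul, (hπ₁ x).2, one_mul]
          simp_rw [h1, ← Finset.mul_sum, hμ₁.2, mul_one]
          rfl
        · have h1 : ∀ x, ∑ u, (M_R * μ₁ x) * |π₀ x μ₁ u - π₀ x μ₂ u|
              = (M_R * μ₁ x) * l1 (fun u => π₀ x μ₁ u - π₀ x μ₂ u) := by
            intro x; rw [← Finset.mul_sum]; rfl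
          simp_rw [h1]
          calc ∑ x, (M_R * μ₁ x) * l1 (fun u => π₀ x μ₁ u - π₀ x μ₂ u)
              ≤ ∑ x, (M_R * μ₁ x) * (L_Q * Δ) := by
                apply Finset.sum_le_sum; intro x _
                exact mul_le_mul_of_nonneg_left (hπLip x) (mul_nonneg hMR (hμ₁.1 x))
            _ = M_R * L_Q * Δ := by
                rw [← Finset.sum_mul]
                rw [← Finset.mul_sum, hμ₁.2, mul_one]
                ring
        · have h1 : ∀ x, ∑ u, (M_R * |μ₁ x - μ₂ x|) * π₀ x μ₂ u = M_R * |μ₁ x - μ₂ x| := by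
            intro x; rw [← Finset.mul_sum, (hπ₂ x).2, mul_one]
          simp_rw [h1, ← Finset.mul_sum]
          rfl
    _ = (L_R + M_R * L_Q + M_R) * Δ := by ring

lemma PMF_lip (L_P L_Q : ℝ) (P : X → U → (X → ℝ) → X → ℝ)
    (hP : ∀ x u μ, IsPmf μ → IsPmf (P x u μ))
    (hPLip : ∀ x u (μ₁ μ₂ : X → ℝ), IsPmf μ₁ → IsPmf μ₂ →
      l1 (fun y => P x u μ₁ y - P x u μ₂ y) ≤ L_P * l1 (fun x' => μ₁ x' - μ₂ x'))
    (π₀ : X → (X → ℝ) → U → ℝ) (μ₁ μ₂ : X → ℝ) (hμ₁ : IsPmf μ₁) (hμ₂ : IsPmf μ₂)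
    (hπ₁ : ∀ x, IsPmf (π₀ x μ₁)) (hπ₂ : ∀ x, IsPmf (π₀ x μ₂))
    (hπLip : ∀ x, l1 (fun u => π₀ x μ₁ u - π₀ x μ₂ u) ≤ L_Q * l1 (fun x' => μ₁ x' - μ₂ x')) :
    l1 (fun y => PMFind P μ₁ π₀ y - PMFind P μ₂ π₀ y)
      ≤ (1 + L_P + L_Q) * l1 (fun x' => μ₁ x' - μ₂ x') := by
  set Δ := l1 (fun x' => μ₁ x' - μ₂ x') with hΔ
  have hΔ0 : 0 ≤ Δ := l1_nonneg _
  unfold l1 PMFind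
  have expand : ∀ y : X, ((∑ x, ∑ u, P x u μ₁ y * π₀ x μ₁ u * μ₁ x)
      - ∑ x, ∑ u, P x u μ₂ y * π₀ x μ₂ u * μ₂ x)
      = ∑ x, ∑ u, (P x u μ₁ y * π₀ x μ₁ u * μ₁ x - P x u μ₂ y * π₀ x μ₂ u * μ₂ x) := by
    intro y; rw [← Finset.sum_sub_distrib]; simp_rw [← Finset.sum_sub_distrib]
  simp_rw [expand]
  calc ∑ y, |∑ x, ∑ u, (P x u μ₁ y * π₀ x μ₁ u * μ₁ x - P x u μ₂ y * π₀ x μ₂ u * μ₂ x)|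
      ≤ ∑ y, ∑ x, ∑ u, |P x u μ₁ y * π₀ x μ₁ u * μ₁ x - P x u μ₂ y * π₀ x μ₂ u * μ₂ x| := by
        apply Finset.sum_le_sum; intro y _
        calc |∑ x, ∑ u, (P x u μ₁ y * π₀ x μ₁ u * μ₁ x - P x u μ₂ y * π₀ x μ₂ u * μ₂ x)|
            ≤ ∑ x, |∑ u, (P x u μ₁ y * π₀ x μ₁ u * μ₁ x - P x u μ₂ y * π₀ x μ₂ u * μ₂ x)| :=
              Finset.abs_sum_le_sum_abs _ _
          _ ≤ ∑ x, ∑ u, |P x u μ₁ y * π₀ x μ₁ u * μ₁ x - P x u μ₂ y * π₀ x μ₂ u * μ₂ x| :=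
              Finset.sum_le_sum fun x _ => Finset.abs_sum_le_sum_abs _ _
    _ = ∑ x, ∑ u, ∑ y, |P x u μ₁ y * π₀ x μ₁ u * μ₁ x - P x u μ₂ y * π₀ x μ₂ u * μ₂ x| := by
        rw [Finset.sum_comm]
        apply Finset.sum_congr rfl
        intro x _
        rw [Finset.sum_comm]
    _ ≤ ∑ x, ∑ u, ((L_P * Δ) * (π₀ x μ₁ u * μ₁ x)
          + μ₁ x * |π₀ x μ₁ u - π₀ x μ₂ u|
          + |μ₁ x - μ₂ x| * π₀ x μ₂ u) := by
        apply Finset.sum_le_sum; intro x _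
        apply Finset.sum_le_sum; intro u _
        have pw : ∀ y, |P x u μ₁ y * π₀ x μ₁ u * μ₁ x - P x u μ₂ y * π₀ x μ₂ u * μ₂ x|
            ≤ |P x u μ₁ y - P x u μ₂ y| * (π₀ x μ₁ u * μ₁ x)
              + (P x u μ₂ y * μ₁ x) * |π₀ x μ₁ u - π₀ x μ₂ u|
              + (P x u μ₂ y * π₀ x μ₂ u) * |μ₁ x - μ₂ x| := by
          intro y
          have e : P x u μ₁ y * π₀ x μ₁ u * μ₁ x - P x u μ₂ y * π₀ x μ₂ u * μ₂ x
              = (P x u μ₁ y - P x u μ₂ y) * (π₀ x μ₁ u * μ₁ x)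
                + (P x u μ₂ y * μ₁ x) * (π₀ x μ₁ u - π₀ x μ₂ u)
                + (P x u μ₂ y * π₀ x μ₂ u) * (μ₁ x - μ₂ x) := by ring
          rw [e]
          have hb1 : 0 ≤ π₀ x μ₁ u * μ₁ x := mul_nonneg ((hπ₁ x).1 u) (hμ₁.1 x)
          have hb2 : 0 ≤ P x u μ₂ y * μ₁ x := mul_nonneg ((hP x u μ₂ hμ₂).1 y) (hμ₁.1 x)
          have hb3 : 0 ≤ P x u μ₂ y * π₀ x μ₂ u :=
            mul_nonneg ((hP x u μ₂ hμ₂).1 y) ((hπ₂ x).1 u)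
          calc |_ + _ + _| ≤ |(P x u μ₁ y - P x u μ₂ y) * (π₀ x μ₁ u * μ₁ x)|
                + |(P x u μ₂ y * μ₁ x) * (π₀ x μ₁ u - π₀ x μ₂ u)|
                + |(P x u μ₂ y * π₀ x μ₂ u) * (μ₁ x - μ₂ x)| :=
              (abs_add_le _ _).trans (by gcongr; exact abs_add_le _ _)
            _ = |P x u μ₁ y - P x u μ₂ y| * (π₀ x μ₁ u * μ₁ x)
                + (P x u μ₂ y * μ₁ x) * |π₀ x μ₁ u - π₀ x μ₂ u|
                + (P x u μ₂ y * π₀ x μ₂ u) * |μ₁ x - μ₂ x| := by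
              simp only [abs_mul, abs_of_nonneg ((hπ₁ x).1 u), abs_of_nonneg (hμ₁.1 x),
                abs_of_nonneg ((hπ₂ x).1 u), abs_of_nonneg ((hP x u μ₂ hμ₂).1 y)]
        calc ∑ y, |P x u μ₁ y * π₀ x μ₁ u * μ₁ x - P x u μ₂ y * π₀ x μ₂ u * μ₂ x|
            ≤ ∑ y, (|P x u μ₁ y - P x u μ₂ y| * (π₀ x μ₁ u * μ₁ x)
              + (P x u μ₂ y * μ₁ x) * |π₀ x μ₁ u - π₀ x μ₂ u|
              + (P x u μ₂ y * π₀ x μ₂ u) * |μ₁ x - μ₂ x|) :=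
              Finset.sum_le_sum fun y _ => pw y
          _ = (∑ y, |P x u μ₁ y - P x u μ₂ y|) * (π₀ x μ₁ u * μ₁ x)
              + (∑ y, P x u μ₂ y) * μ₁ x * |π₀ x μ₁ u - π₀ x μ₂ u|
              + (∑ y, P x u μ₂ y) * π₀ x μ₂ u * |μ₁ x - μ₂ x| := by
              simp_rw [Finset.sum_add_distrib, ← Finset.sum_mul]
          _ ≤ (L_P * Δ) * (π₀ x μ₁ u * μ₁ x)
              + μ₁ x * |π₀ x μ₁ u - π₀ x μ₂ u|
              + |μ₁ x - μ₂ x| * π₀ x μ₂ u := by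
              rw [(hP x u μ₂ hμ₂).2, one_mul, one_mul]
              gcongr ?_ + ?_ + ?_
              · have : (∑ y, |P x u μ₁ y - P x u μ₂ y|) ≤ L_P * Δ := hPLip x u μ₁ μ₂ hμ₁ hμ₂
                exact mul_le_mul_of_nonneg_right this (mul_nonneg ((hπ₁ x).1 u) (hμ₁.1 x))
              · exact le_refl _
              · rw [mul_comm]
    _ ≤ (1 + L_P + L_Q) * Δ := by
        have split : ∑ x, ∑ u, ((L_P * Δ) * (π₀ x μ₁ u * μ₁ x)
            + μ₁ x * |π₀ x μ₁ u - π₀ x μ₂ u|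
            + |μ₁ x - μ₂ x| * π₀ x μ₂ u)
            = (∑ x, ∑ u, (L_P * Δ) * (π₀ x μ₁ u * μ₁ x))
              + (∑ x, ∑ u, μ₁ x * |π₀ x μ₁ u - π₀ x μ₂ u|)
              + (∑ x, ∑ u, |μ₁ x - μ₂ x| * π₀ x μ₂ u) := by
          simp_rw [Finset.sum_add_distrib]
        rw [split]
        have s1 : (∑ x, ∑ u, (L_P * Δ) * (π₀ x μ₁ u * μ₁ x)) = L_P * Δ := by
          have h1 : ∀ x, ∑ u, (L_P * Δ) * (π₀ x μ₁ u * μ₁ x) = (L_P * Δ) * μ₁ x := by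
            intro x; rw [← Finset.mul_sum, ← Finset.sum_mul, (hπ₁ x).2, one_mul]
          simp_rw [h1, ← Finset.mul_sum, hμ₁.2, mul_one]
        have s2 : (∑ x, ∑ u, μ₁ x * |π₀ x μ₁ u - π₀ x μ₂ u|) ≤ L_Q * Δ := by
          have h1 : ∀ x, ∑ u, μ₁ x * |π₀ x μ₁ u - π₀ x μ₂ u|
              = μ₁ x * l1 (fun u => π₀ x μ₁ u - π₀ x μ₂ u) := by
            intro x; rw [← Finset.mul_sum]; rfl
          simp_rw [h1]
          calc ∑ x, μ₁ x * l1 (fun u => π₀ x μ₁ u - π₀ x μ₂ u)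
              ≤ ∑ x, μ₁ x * (L_Q * Δ) := by
                apply Finset.sum_le_sum; intro x _
                exact mul_le_mul_of_nonneg_left (hπLip x) (hμ₁.1 x)
            _ = L_Q * Δ := by rw [← Finset.sum_mul, hμ₁.2, one_mul]
        have s3 : (∑ x, ∑ u, |μ₁ x - μ₂ x| * π₀ x μ₂ u) = Δ := by
          have h1 : ∀ x, ∑ u, |μ₁ x - μ₂ x| * π₀ x μ₂ u = |μ₁ x - μ₂ x| := by
            intro x; rw [← Finset.mul_sum, (hπ₂ x).2, mul_one]
          simp_rw [h1]
          rfl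
        rw [s1, s3]
        nlinarith [s2]

end Lip
section Chaos

variable {X U : Type*} [Fintype X] [Fintype U] [DecidableEq X] [DecidableEq U]

lemma step_chaos {N : ℕ} (hN : 0 < N)
    (π₀ : X → (X → ℝ) → U → ℝ) (P : X → U → (X → ℝ) → X → ℝ)
    (hP : ∀ x u μ, IsPmf μ → IsPmf (P x u μ))
    (hπ : ∀ x μ, IsPmf μ → IsPmf (π₀ x μ))
    (s : Fin N → X) :
    ∑ a : Fin N → U, ∑ s' : Fin N → X,
        ((∏ i, π₀ (s i) (emp s) (a i)) * ∏ i, P (s i) (a i) (emp s) (s' i))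
          * l1 (fun y => emp s' y - PMFind P (emp s) π₀ y)
      ≤ Real.sqrt (Fintype.card X) / Real.sqrt N := by
  have hνpmf : IsPmf (emp s) := emp_isPmf hN s
  have hNR : (0:ℝ) < N := by exact_mod_cast hN
  -- the per-agent joint action/next-state kernel
  set ρ : Fin N → U → X → ℝ := fun k u y => π₀ (s k) (emp s) u * P (s k) u (emp s) y with hρdef
  have hρ0 : ∀ k u y, 0 ≤ ρ k u y := fun k u y =>
    mul_nonneg ((hπ (s k) _ hνpmf).1 u) ((hP (s k) u _ hνpmf).1 y)
  have hρ1 : ∀ k, ∑ u, ∑ y, ρ k u y = 1 := by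
    intro k
    have h1 : ∀ u, ∑ y, ρ k u y = π₀ (s k) (emp s) u := by
      intro u
      simp only [hρdef, ← Finset.mul_sum, (hP (s k) u _ hνpmf).2, mul_one]
    simp_rw [h1]
    exact (hπ (s k) _ hνpmf).2
  set q : Fin N → X → ℝ := fun k y => ∑ u, ρ k u y with hqdef
  have hq0 : ∀ k y, 0 ≤ q k y := fun k y => Finset.sum_nonneg fun u _ => hρ0 k u y
  set m : X → ℝ := PMFind P (emp s) π₀ with hmdef
  have hmpmf : IsPmf m :=
    PMFind_isPmf P (emp s) π₀ hνpmf (fun x => hπ x _ hνpmf) (fun x u => hP x u _ hνpmf)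
  have hm : ∀ y, m y = (1/(N:ℝ)) * ∑ k, q k y := by
    intro y
    show ∑ x, ∑ u, P x u (emp s) y * π₀ x (emp s) u * emp s x = _
    have h1 : ∀ x, ∑ u, P x u (emp s) y * π₀ x (emp s) u * emp s x
        = emp s x * ∑ u, π₀ x (emp s) u * P x u (emp s) y := by
      intro x
      rw [Finset.mul_sum]
      apply Finset.sum_congr rfl
      intro u _
      ring
    simp_rw [h1]
    rw [emp_weighted s (fun x => ∑ u, π₀ x (emp s) u * P x u (emp s) y)]
  -- rewrite the weight as a single product
  have hprod : ∀ (a : Fin N → U) (s' : Fin N → X),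
      ((∏ i, π₀ (s i) (emp s) (a i)) * ∏ i, P (s i) (a i) (emp s) (s' i))
        = ∏ k, ρ k (a k) (s' k) := by
    intro a s'
    rw [← Finset.prod_mul_distrib]
  simp_rw [hprod]
  -- expand l1 and pull the y-sum outside
  have hexp : ∀ s' : Fin N → X, l1 (fun y => emp s' y - m y) = ∑ y, |emp s' y - m y| := fun _ => rfl
  simp_rw [hexp, Finset.mul_sum]
  rw [show ∑ a : Fin N → U, ∑ s' : Fin N → X, ∑ y : X,
        (∏ k, ρ k (a k) (s' k)) * |emp s' y - m y|
      = ∑ y : X, ∑ a : Fin N → U, ∑ s' : Fin N → X,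
        (∏ k, ρ k (a k) (s' k)) * |emp s' y - m y| from by
    calc ∑ a : Fin N → U, ∑ s' : Fin N → X, ∑ y : X,
          (∏ k, ρ k (a k) (s' k)) * |emp s' y - m y|
        = ∑ a : Fin N → U, ∑ y : X, ∑ s' : Fin N → X,
          (∏ k, ρ k (a k) (s' k)) * |emp s' y - m y| :=
          Finset.sum_congr rfl (fun a _ => Finset.sum_comm)
      _ = ∑ y : X, ∑ a : Fin N → U, ∑ s' : Fin N → X,
          (∏ k, ρ k (a k) (s' k)) * |emp s' y - m y| := Finset.sum_comm]
  have key : ∀ y : X, ∑ a : Fin N → U, ∑ s' : Fin N → X,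
      (∏ k, ρ k (a k) (s' k)) * |emp s' y - m y| ≤ Real.sqrt (m y / N) := by
    intro y
    set d : Fin N → X → ℝ := fun k x => (if x = y then (1:ℝ) else 0) - q k y with hddef
    have hmean : ∀ k, ∑ u, ∑ y', ρ k u y' * d k y' = 0 := by
      intro k
      have h1 : ∀ u, ∑ y', ρ k u y' * d k y' = ρ k u y - (∑ y', ρ k u y') * q k y := by
        intro u
        simp only [hddef, mul_sub]
        rw [Finset.sum_sub_distrib]
        congr 1
        · simp [mul_ite, mul_one, mul_zero]
        · rw [Finset.sum_mul]
      simp_rw [h1]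
      rw [Finset.sum_sub_distrib]
      have h2 : ∑ u, (∑ y', ρ k u y') * q k y = (∑ u, ∑ y', ρ k u y') * q k y := by
        rw [Finset.sum_mul]
      rw [h2, hρ1 k, one_mul]
      simp [hqdef]
    have hvar : ∀ k, ∑ u, ∑ y', ρ k u y' * (d k y' * d k y') = q k y - q k y ^ 2 := by
      intro k
      have pw : ∀ y', d k y' * d k y' = (if y' = y then (1:ℝ) else 0) * (1 - 2 * q k y) + q k y ^ 2 := by
        intro y'
        by_cases h : y' = y <;> simp [hddef, h] <;> ring
      have h1 : ∀ u, ∑ y', ρ k u y' * (d k y' * d k y')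
          = ρ k u y * (1 - 2 * q k y) + (∑ y', ρ k u y') * q k y ^ 2 := by
        intro u
        simp_rw [pw, mul_add]
        rw [Finset.sum_add_distrib]
        congr 1
        · simp_rw [← mul_assoc]
          rw [← Finset.sum_mul]
          congr 1
          simp [mul_ite, mul_one, mul_zero]
        · rw [Finset.sum_mul]
      simp_rw [h1]
      rw [Finset.sum_add_distrib, ← Finset.sum_mul, ← Finset.sum_mul, hρ1 k, one_mul]
      have : ∑ u, ρ k u y = q k y := rfl
      rw [this]
      ring
    -- Jensen
    have flat : ∀ F : (Fin N → X) → ℝ, ∑ a : Fin N → U, ∑ s' : Fin N → X,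
        (∏ k, ρ k (a k) (s' k)) * F s'
        = ∑ p : (Fin N → U) × (Fin N → X), (∏ k, ρ k (p.1 k) (p.2 k)) * F p.2 := by
      intro F
      rw [Fintype.sum_prod_type]
    have hw0 : ∀ p : (Fin N → U) × (Fin N → X), 0 ≤ ∏ k, ρ k (p.1 k) (p.2 k) :=
      fun p => Finset.prod_nonneg fun k _ => hρ0 _ _ _
    have hw1 : ∑ p : (Fin N → U) × (Fin N → X), ∏ k, ρ k (p.1 k) (p.2 k) = 1 := by
      rw [Fintype.sum_prod_type]
      rw [sum_pi2_prod (fun k u y' => ρ k u y')]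
      simp [hρ1]
    calc ∑ a : Fin N → U, ∑ s' : Fin N → X, (∏ k, ρ k (a k) (s' k)) * |emp s' y - m y|
        = ∑ p : (Fin N → U) × (Fin N → X), (∏ k, ρ k (p.1 k) (p.2 k)) * |emp p.2 y - m y| :=
          flat _
      _ ≤ Real.sqrt (∑ p : (Fin N → U) × (Fin N → X),
            (∏ k, ρ k (p.1 k) (p.2 k)) * (emp p.2 y - m y) ^ 2) :=
          jensen_abs (fun p : (Fin N → U) × (Fin N → X) => ∏ k, ρ k (p.1 k) (p.2 k))
            (fun p : (Fin N → U) × (Fin N → X) => emp p.2 y - m y) hw0 hw1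
      _ ≤ Real.sqrt (m y / N) := by
          apply Real.sqrt_le_sqrt
          rw [← flat (fun s' => (emp s' y - m y) ^ 2)]
          -- second moment computation
          have hdecomp : ∀ s' : Fin N → X,
              emp s' y - m y = (1/(N:ℝ)) * ∑ k, d k (s' k) := by
            intro s'
            rw [hm y]
            show (∑ k, if s' k = y then (1:ℝ) else 0) / N - _ = _
            simp only [hddef]
            rw [Finset.sum_sub_distrib]
            ring
          have e1 : ∀ s' : Fin N → X, (emp s' y - m y) ^ 2
              = (1/(N:ℝ))^2 * ∑ k, ∑ l, d k (s' k) * d l (s' l) := by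
            intro s'
            rw [hdecomp s', mul_pow, pow_two (∑ k : Fin N, d k (s' k)), Finset.sum_mul_sum]
          simp_rw [e1]
          have pull : (1/(N:ℝ))^2 * (∑ a : Fin N → U, ∑ s' : Fin N → X,
              (∏ k, ρ k (a k) (s' k)) * (∑ k, ∑ l, d k (s' k) * d l (s' l)))
              = ∑ a : Fin N → U, ∑ s' : Fin N → X, (∏ k, ρ k (a k) (s' k)) *
                ((1/(N:ℝ))^2 * (∑ k, ∑ l, d k (s' k) * d l (s' l))) := by
            rw [Finset.mul_sum]
            refine Finset.sum_congr rfl fun a _ => ?_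
            rw [Finset.mul_sum]
            exact Finset.sum_congr rfl fun s' _ => by ring
          rw [← pull]
          have e3 : ∑ a : Fin N → U, ∑ s' : Fin N → X,
              (∏ k, ρ k (a k) (s' k)) * (∑ k, ∑ l, d k (s' k) * d l (s' l))
              = ∑ k, ∑ l, ∑ a : Fin N → U, ∑ s' : Fin N → X,
                (∏ k', ρ k' (a k') (s' k')) * (d k (s' k) * d l (s' l)) := by
            simp_rw [Finset.mul_sum]
            calc ∑ a : Fin N → U, ∑ s' : Fin N → X, ∑ k, ∑ l,
                  (∏ k', ρ k' (a k') (s' k')) * (d k (s' k) * d l (s' l))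
                = ∑ a : Fin N → U, ∑ k, ∑ s' : Fin N → X, ∑ l,
                  (∏ k', ρ k' (a k') (s' k')) * (d k (s' k) * d l (s' l)) :=
                  Finset.sum_congr rfl (fun a _ => Finset.sum_comm)
              _ = ∑ k, ∑ a : Fin N → U, ∑ s' : Fin N → X, ∑ l,
                  (∏ k', ρ k' (a k') (s' k')) * (d k (s' k) * d l (s' l)) :=
                  Finset.sum_comm
              _ = ∑ k, ∑ a : Fin N → U, ∑ l, ∑ s' : Fin N → X,
                  (∏ k', ρ k' (a k') (s' k')) * (d k (s' k) * d l (s' l)) :=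
                  Finset.sum_congr rfl (fun k _ => Finset.sum_congr rfl
                    (fun a _ => Finset.sum_comm))
              _ = ∑ k, ∑ l, ∑ a : Fin N → U, ∑ s' : Fin N → X,
                  (∏ k', ρ k' (a k') (s' k')) * (d k (s' k) * d l (s' l)) :=
                  Finset.sum_congr rfl (fun k _ => Finset.sum_comm)
          rw [e3]
          have e4 : ∀ k l, ∑ a : Fin N → U, ∑ s' : Fin N → X,
              (∏ k', ρ k' (a k') (s' k')) * (d k (s' k) * d l (s' l))
              = if l = k then q k y - q k y ^ 2 else 0 := by
            intro k l
            by_cases hkl : l = k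
            · subst hkl
              rw [if_pos rfl]
              have := sum_pi2_one (fun k' u y' => ρ k' u y') hρ1 l (fun x => d l x * d l x)
              calc ∑ a : Fin N → U, ∑ s' : Fin N → X,
                    (∏ k', ρ k' (a k') (s' k')) * (d l (s' l) * d l (s' l))
                  = ∑ u, ∑ y', ρ l u y' * (d l y' * d l y') := this
                _ = q l y - q l y ^ 2 := hvar l
            · rw [if_neg hkl]
              have hkl' : k ≠ l := fun h => hkl h.symm
              rw [sum_pi2_two (fun k' u y' => ρ k' u y') hρ1 hkl' (d k) (d l)]
              rw [hmean k, zero_mul]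
          simp_rw [e4]
          have e5 : ∀ k : Fin N, ∑ l, (if l = k then q k y - q k y ^ 2 else 0)
              = q k y - q k y ^ 2 := by
            intro k
            simp [Finset.sum_ite_eq', mem_univ]
          simp_rw [e5]
          have e6 : ∑ k, (q k y - q k y ^ 2) ≤ ∑ k, q k y :=
            Finset.sum_le_sum fun k _ => by nlinarith [sq_nonneg (q k y)]
          have e7 : ∑ k, q k y = N * m y := by
            rw [hm y]
            field_simp
          calc (1/(N:ℝ))^2 * ∑ k, (q k y - q k y ^ 2)
              ≤ (1/(N:ℝ))^2 * ∑ k, q k y := by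
                apply mul_le_mul_of_nonneg_left e6 (by positivity)
            _ = (1/(N:ℝ))^2 * (N * m y) := by rw [e7]
            _ = m y / N := by field_simp
  calc ∑ y : X, ∑ a : Fin N → U, ∑ s' : Fin N → X,
        (∏ k, ρ k (a k) (s' k)) * |emp s' y - m y|
      ≤ ∑ y : X, Real.sqrt (m y / N) := Finset.sum_le_sum fun y _ => key y
    _ ≤ Real.sqrt (Fintype.card X) * Real.sqrt (∑ y, m y / N) :=
        sum_sqrt_le _ (fun y => div_nonneg (hmpmf.1 y) (le_of_lt hNR))
    _ = Real.sqrt (Fintype.card X) / Real.sqrt N := by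
        rw [← Finset.sum_div, hmpmf.2, one_div, Real.sqrt_inv, div_eq_mul_inv]

end Chaos
section Rec

variable {X U : Type*} [Fintype X] [Fintype U] [DecidableEq X] [DecidableEq U]

lemma weight_sum_one {N : ℕ} (hN : 0 < N)
    (π₀ : X → (X → ℝ) → U → ℝ) (P : X → U → (X → ℝ) → X → ℝ)
    (hP : ∀ x u μ, IsPmf μ → IsPmf (P x u μ))
    (hπ : ∀ x μ, IsPmf μ → IsPmf (π₀ x μ))
    (s : Fin N → X) :
    ∑ a : Fin N → U, ∑ s' : Fin N → X,
        ((∏ i, π₀ (s i) (emp s) (a i)) * ∏ i, P (s i) (a i) (emp s) (s' i)) = 1 := by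
  have hνpmf : IsPmf (emp s) := emp_isPmf hN s
  simp_rw [← Finset.prod_mul_distrib]
  rw [sum_pi2_prod (fun k u y => π₀ (s k) (emp s) u * P (s k) u (emp s) y)]
  have h1 : ∀ k : Fin N, ∑ u, ∑ y, π₀ (s k) (emp s) u * P (s k) u (emp s) y = 1 := by
    intro k
    have h2 : ∀ u, ∑ y, π₀ (s k) (emp s) u * P (s k) u (emp s) y = π₀ (s k) (emp s) u := by
      intro u
      rw [← Finset.mul_sum, (hP (s k) u _ hνpmf).2, mul_one]
    simp_rw [h2]
    exact (hπ (s k) _ hνpmf).2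
  simp [h1]

lemma Wstep {N : ℕ} (P : X → U → (X → ℝ) → X → ℝ)
    (π : ℕ → X → (X → ℝ) → U → ℝ) (x₀ : Fin N → X) (t : ℕ) (F : (Fin N → X) → ℝ) :
    ∑ s' : Fin N → X, Wprocind P π x₀ (t+1) s' * F s'
      = ∑ s : Fin N → X, Wprocind P π x₀ t s * ∑ a : Fin N → U, ∑ s' : Fin N → X,
          ((∏ i, π t (s i) (emp s) (a i)) * ∏ i, P (s i) (a i) (emp s) (s' i)) * F s' := by
  simp only [Wprocind]
  calc ∑ s' : Fin N → X, (∑ s : Fin N → X, Wprocind P π x₀ t s *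
        ∑ a : Fin N → U, (∏ i, π t (s i) (emp s) (a i)) *
          ∏ i, P (s i) (a i) (emp s) (s' i)) * F s'
      = ∑ s' : Fin N → X, ∑ s : Fin N → X, (Wprocind P π x₀ t s *
        ∑ a : Fin N → U, (∏ i, π t (s i) (emp s) (a i)) *
          ∏ i, P (s i) (a i) (emp s) (s' i)) * F s' := by
        apply Finset.sum_congr rfl
        intro s' _
        rw [Finset.sum_mul]
    _ = ∑ s : Fin N → X, ∑ s' : Fin N → X, (Wprocind P π x₀ t s *
        ∑ a : Fin N → U, (∏ i, π t (s i) (emp s) (a i)) *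
          ∏ i, P (s i) (a i) (emp s) (s' i)) * F s' := Finset.sum_comm
    _ = ∑ s : Fin N → X, Wprocind P π x₀ t s * ∑ a : Fin N → U, ∑ s' : Fin N → X,
          ((∏ i, π t (s i) (emp s) (a i)) * ∏ i, P (s i) (a i) (emp s) (s' i)) * F s' := by
        apply Finset.sum_congr rfl
        intro s _
        have assoc : ∀ s' : Fin N → X, (Wprocind P π x₀ t s *
            ∑ a : Fin N → U, (∏ i, π t (s i) (emp s) (a i)) *
              ∏ i, P (s i) (a i) (emp s) (s' i)) * F s'
            = Wprocind P π x₀ t s * ((∑ a : Fin N → U, (∏ i, π t (s i) (emp s) (a i)) *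
              ∏ i, P (s i) (a i) (emp s) (s' i)) * F s') := fun s' => by ring
        simp_rw [assoc]
        rw [← Finset.mul_sum]
        congr 1
        calc ∑ s' : Fin N → X, (∑ a : Fin N → U, (∏ i, π t (s i) (emp s) (a i)) *
              ∏ i, P (s i) (a i) (emp s) (s' i)) * F s'
            = ∑ s' : Fin N → X, ∑ a : Fin N → U, ((∏ i, π t (s i) (emp s) (a i)) *
              ∏ i, P (s i) (a i) (emp s) (s' i)) * F s' := by
              apply Finset.sum_congr rfl
              intro s' _
              rw [Finset.sum_mul]
          _ = ∑ a : Fin N → U, ∑ s' : Fin N → X, ((∏ i, π t (s i) (emp s) (a i)) *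
              ∏ i, P (s i) (a i) (emp s) (s' i)) * F s' := Finset.sum_comm

lemma reward_marginal {N : ℕ} (hN : 0 < N) (r : X → U → (X → ℝ) → ℝ)
    (π₀ : X → (X → ℝ) → U → ℝ)
    (hπ : ∀ x μ, IsPmf μ → IsPmf (π₀ x μ))
    (s : Fin N → X) :
    ∑ a : Fin N → U, (∏ i, π₀ (s i) (emp s) (a i))
        * ((1 / N : ℝ) * ∑ i, r (s i) (a i) (emp s))
      = rMFind r (emp s) π₀ := by
  have hνpmf : IsPmf (emp s) := emp_isPmf hN s
  have h1 : ∀ a : Fin N → U, (∏ i, π₀ (s i) (emp s) (a i))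
      * ((1/N:ℝ) * ∑ i, r (s i) (a i) (emp s))
      = ∑ i, (∏ j, π₀ (s j) (emp s) (a j)) * ((1/N:ℝ) * r (s i) (a i) (emp s)) := by
    intro a
    rw [Finset.mul_sum, Finset.mul_sum]
  simp_rw [h1]
  rw [Finset.sum_comm]
  have h2 : ∀ i, ∑ a : Fin N → U, (∏ j, π₀ (s j) (emp s) (a j))
      * ((1/N:ℝ) * r (s i) (a i) (emp s))
      = ∑ u, π₀ (s i) (emp s) u * ((1/N:ℝ) * r (s i) u (emp s)) :=
    fun i => sum_pi_prod_one (fun j u => π₀ (s j) (emp s) u)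
      (fun j => (hπ (s j) _ hνpmf).2) i (fun u => (1/N:ℝ) * r (s i) u (emp s))
  simp_rw [h2]
  have h3 : rMFind r (emp s) π₀
      = (1/N:ℝ) * ∑ i, ∑ u, π₀ (s i) (emp s) u * r (s i) u (emp s) := by
    unfold rMFind
    have h4 : ∀ x, ∑ u, r x u (emp s) * π₀ x (emp s) u * emp s x
        = emp s x * ∑ u, π₀ x (emp s) u * r x u (emp s) := by
      intro x
      rw [Finset.mul_sum]
      exact Finset.sum_congr rfl fun u _ => by ring
    simp_rw [h4]
    rw [emp_weighted s (fun x => ∑ u, π₀ x (emp s) u * r x u (emp s))]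
  rw [h3, Finset.mul_sum]
  apply Finset.sum_congr rfl
  intro i _
  rw [Finset.mul_sum]
  exact Finset.sum_congr rfl fun u _ => by ring

lemma err_rec {N : ℕ} (hN : 0 < N) (L_P L_Q S_P : ℝ) (hLP0 : 0 ≤ L_P) (hLQ0 : 0 ≤ L_Q)
    (hSP_lb : 1 + L_P + L_Q ≤ S_P) (hSP1 : 1 < S_P)
    (P : X → U → (X → ℝ) → X → ℝ)
    (hP : ∀ x u μ, IsPmf μ → IsPmf (P x u μ))
    (hPLip : ∀ x u (μ₁ μ₂ : X → ℝ), IsPmf μ₁ → IsPmf μ₂ →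
      l1 (fun y => P x u μ₁ y - P x u μ₂ y) ≤ L_P * l1 (fun x' => μ₁ x' - μ₂ x'))
    (π : ℕ → X → (X → ℝ) → U → ℝ)
    (hπpmf : ∀ t x μ, IsPmf μ → IsPmf (π t x μ))
    (hπLip : ∀ t x (μ₁ μ₂ : X → ℝ), IsPmf μ₁ → IsPmf μ₂ →
      l1 (fun u => π t x μ₁ u - π t x μ₂ u) ≤ L_Q * l1 (fun x' => μ₁ x' - μ₂ x'))
    (x₀ : Fin N → X) :
    ∀ t, ∑ s : Fin N → X, Wprocind P π x₀ t s
        * l1 (fun x => emp s x - muFlowind P π (emp x₀) t x)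
      ≤ (Real.sqrt (Fintype.card X) / Real.sqrt N) * ((S_P ^ t - 1) / (S_P - 1)) := by
  have hμ₀pmf : IsPmf (emp x₀) := emp_isPmf hN x₀
  have hflowpmf : ∀ t, IsPmf (muFlowind P π (emp x₀) t) :=
    muFlow_isPmf P π (emp x₀) hμ₀pmf hπpmf hP
  set K' : ℝ := Real.sqrt (Fintype.card X) / Real.sqrt N with hK'
  have hK0 : 0 ≤ K' := by positivity
  have hSPd : (0:ℝ) < S_P - 1 := by linarith
  intro t
  induction t with
  | zero =>
      have h0 : l1 (fun x => emp x₀ x - emp x₀ x) = 0 := by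
        unfold l1; simp
      simp only [Wprocind, muFlowind]
      simp only [ite_mul, one_mul, zero_mul, Finset.sum_ite_eq', mem_univ, if_pos, h0]
      simp
  | succ t ih =>
      have step := Wstep P π x₀ t
        (fun s' => l1 (fun x => emp s' x - muFlowind P π (emp x₀) (t+1) x))
      rw [step]
      have per_s : ∀ s : Fin N → X, ∑ a : Fin N → U, ∑ s' : Fin N → X,
          ((∏ i, π t (s i) (emp s) (a i)) * ∏ i, P (s i) (a i) (emp s) (s' i))
            * l1 (fun x => emp s' x - muFlowind P π (emp x₀) (t+1) x)
          ≤ K' + S_P * l1 (fun x => emp s x - muFlowind P π (emp x₀) t x) := by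
        intro s
        have hνpmf : IsPmf (emp s) := emp_isPmf hN s
        have hw0 : ∀ (a : Fin N → U) (s' : Fin N → X),
            0 ≤ (∏ i, π t (s i) (emp s) (a i)) * ∏ i, P (s i) (a i) (emp s) (s' i) :=
          fun a s' => mul_nonneg
            (Finset.prod_nonneg fun i _ => (hπpmf t (s i) _ hνpmf).1 (a i))
            (Finset.prod_nonneg fun i _ => (hP (s i) (a i) _ hνpmf).1 (s' i))
        have hB : l1 (fun x => PMFind P (emp s) (π t) x - muFlowind P π (emp x₀) (t+1) x)
            ≤ S_P * l1 (fun x => emp s x - muFlowind P π (emp x₀) t x) := by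
          have hflow : muFlowind P π (emp x₀) (t+1)
              = PMFind P (muFlowind P π (emp x₀) t) (π t) := rfl
          rw [hflow]
          calc l1 (fun x => PMFind P (emp s) (π t) x
                - PMFind P (muFlowind P π (emp x₀) t) (π t) x)
              ≤ (1 + L_P + L_Q) * l1 (fun x => emp s x - muFlowind P π (emp x₀) t x) :=
                PMF_lip L_P L_Q P hP hPLip (π t) (emp s) (muFlowind P π (emp x₀) t)
                  hνpmf (hflowpmf t) (fun x => hπpmf t x _ hνpmf)
                  (fun x => hπpmf t x _ (hflowpmf t))
                  (fun x => hπLip t x _ _ hνpmf (hflowpmf t))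
            _ ≤ S_P * l1 (fun x => emp s x - muFlowind P π (emp x₀) t x) :=
                mul_le_mul_of_nonneg_right hSP_lb (l1_nonneg _)
        calc ∑ a : Fin N → U, ∑ s' : Fin N → X,
            ((∏ i, π t (s i) (emp s) (a i)) * ∏ i, P (s i) (a i) (emp s) (s' i))
              * l1 (fun x => emp s' x - muFlowind P π (emp x₀) (t+1) x)
            ≤ ∑ a : Fin N → U, ∑ s' : Fin N → X,
              ((∏ i, π t (s i) (emp s) (a i)) * ∏ i, P (s i) (a i) (emp s) (s' i))
                * (l1 (fun x => emp s' x - PMFind P (emp s) (π t) x)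
                  + l1 (fun x => PMFind P (emp s) (π t) x - muFlowind P π (emp x₀) (t+1) x)) := by
              apply Finset.sum_le_sum; intro a _
              apply Finset.sum_le_sum; intro s' _
              exact mul_le_mul_of_nonneg_left (l1_triangle _ _ _) (hw0 a s')
          _ = (∑ a : Fin N → U, ∑ s' : Fin N → X,
              ((∏ i, π t (s i) (emp s) (a i)) * ∏ i, P (s i) (a i) (emp s) (s' i))
                * l1 (fun x => emp s' x - PMFind P (emp s) (π t) x))
              + (∑ a : Fin N → U, ∑ s' : Fin N → X,
              ((∏ i, π t (s i) (emp s) (a i)) * ∏ i, P (s i) (a i) (emp s) (s' i)))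
                * l1 (fun x => PMFind P (emp s) (π t) x - muFlowind P π (emp x₀) (t+1) x) := by
              simp_rw [mul_add, Finset.sum_add_distrib, Finset.sum_mul]
          _ ≤ K' + 1 * (S_P * l1 (fun x => emp s x - muFlowind P π (emp x₀) t x)) := by
              gcongr ?_ + ?_
              · exact step_chaos hN (π t) P hP (fun x μ h => hπpmf t x μ h) s
              · rw [weight_sum_one hN (π t) P hP (fun x μ h => hπpmf t x μ h) s]
                rw [one_mul, one_mul]
                exact hB
          _ = K' + S_P * l1 (fun x => emp s x - muFlowind P π (emp x₀) t x) := by ring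
      have hWnn : ∀ s, 0 ≤ Wprocind P π x₀ t s := Wproc_nonneg hN P π x₀ hπpmf hP t
      calc ∑ s : Fin N → X, Wprocind P π x₀ t s * ∑ a : Fin N → U, ∑ s' : Fin N → X,
            ((∏ i, π t (s i) (emp s) (a i)) * ∏ i, P (s i) (a i) (emp s) (s' i))
              * l1 (fun x => emp s' x - muFlowind P π (emp x₀) (t+1) x)
          ≤ ∑ s : Fin N → X, Wprocind P π x₀ t s
              * (K' + S_P * l1 (fun x => emp s x - muFlowind P π (emp x₀) t x)) := by
            apply Finset.sum_le_sum; intro s _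
            exact mul_le_mul_of_nonneg_left (per_s s) (hWnn s)
        _ = K' * (∑ s : Fin N → X, Wprocind P π x₀ t s)
            + S_P * ∑ s : Fin N → X, Wprocind P π x₀ t s
                * l1 (fun x => emp s x - muFlowind P π (emp x₀) t x) := by
            simp_rw [mul_add, Finset.sum_add_distrib]
            congr 1
            · rw [← Finset.sum_mul, mul_comm]
            · rw [Finset.mul_sum]
              exact Finset.sum_congr rfl fun s _ => by ring
        _ ≤ K' * 1 + S_P * (K' * ((S_P ^ t - 1) / (S_P - 1))) := by
            gcongr ?_ + ?_
            · rw [Wproc_sum_one hN P π x₀ hπpmf hP t]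
            · exact mul_le_mul_of_nonneg_left ih (by linarith)
        _ = K' * ((S_P ^ (t+1) - 1) / (S_P - 1)) := by
            have : (1:ℝ) + S_P * ((S_P ^ t - 1) / (S_P - 1))
                = (S_P ^ (t+1) - 1) / (S_P - 1) := by
              field_simp
              ring
            calc K' * 1 + S_P * (K' * ((S_P ^ t - 1) / (S_P - 1)))
                = K' * ((1:ℝ) + S_P * ((S_P ^ t - 1) / (S_P - 1))) := by ring
              _ = K' * ((S_P ^ (t+1) - 1) / (S_P - 1)) := by rw [this]

end Rec
section ValueDiff

variable {X U : Type*} [Fintype X] [Fintype U] [DecidableEq X] [DecidableEq U]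

lemma value_diff {N : ℕ} (hN : 0 < N)
    (M_R L_R L_P L_Q γ S_P C_R : ℝ)
    (hMR : 0 ≤ M_R) (hLP0 : 0 ≤ L_P) (hLQ0 : 0 ≤ L_Q)
    (hγ0 : 0 ≤ γ) (hγ1 : γ < 1)
    (hSP_lb : 1 + L_P + L_Q ≤ S_P) (hSP1 : 1 < S_P) (hγSP : γ * S_P < 1)
    (hCR : L_R + M_R * L_Q + M_R ≤ C_R) (hCR0 : 0 ≤ C_R)
    (r : X → U → (X → ℝ) → ℝ)
    (hbdd : ∀ x u μ, IsPmf μ → |r x u μ| ≤ M_R)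
    (hrLip : ∀ x u (μ₁ μ₂ : X → ℝ), IsPmf μ₁ → IsPmf μ₂ →
      |r x u μ₁ - r x u μ₂| ≤ L_R * l1 (fun x' => μ₁ x' - μ₂ x'))
    (P : X → U → (X → ℝ) → X → ℝ)
    (hP : ∀ x u μ, IsPmf μ → IsPmf (P x u μ))
    (hPLip : ∀ x u (μ₁ μ₂ : X → ℝ), IsPmf μ₁ → IsPmf μ₂ →
      l1 (fun y => P x u μ₁ y - P x u μ₂ y) ≤ L_P * l1 (fun x' => μ₁ x' - μ₂ x'))
    (π : ℕ → X → (X → ℝ) → U → ℝ)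
    (hπpmf : ∀ t x μ, IsPmf μ → IsPmf (π t x μ))
    (hπLip : ∀ t x (μ₁ μ₂ : X → ℝ), IsPmf μ₁ → IsPmf μ₂ →
      l1 (fun u => π t x μ₁ u - π t x μ₂ u) ≤ L_Q * l1 (fun x' => μ₁ x' - μ₂ x'))
    (x₀ : Fin N → X) :
    |vMARLind γ r P π x₀ - vMFind γ r P π (emp x₀)|
      ≤ (Real.sqrt (Fintype.card X) / Real.sqrt N) * (C_R / (S_P - 1))
          * (1 / (1 - γ * S_P) - 1 / (1 - γ)) := by
  have hμ₀pmf : IsPmf (emp x₀) := emp_isPmf hN x₀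
  have hflowpmf : ∀ t, IsPmf (muFlowind P π (emp x₀) t) :=
    muFlow_isPmf P π (emp x₀) hμ₀pmf hπpmf hP
  set K' : ℝ := Real.sqrt (Fintype.card X) / Real.sqrt N with hK'
  have hK0 : 0 ≤ K' := by positivity
  have hSPd : (0:ℝ) < S_P - 1 := by linarith
  have hSP0 : (0:ℝ) ≤ S_P := by linarith
  have hγSP0 : 0 ≤ γ * S_P := mul_nonneg hγ0 hSP0
  set A : ℕ → ℝ := fun t => γ ^ t * ∑ s : Fin N → X,
    Wprocind P π x₀ t s * rMFind r (emp s) (π t) with hA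
  set B : ℕ → ℝ := fun t => γ ^ t * rMFind r (muFlowind P π (emp x₀) t) (π t) with hB
  have hVeq : vMARLind γ r P π x₀ = ∑' t, A t := by
    apply tsum_congr
    intro t
    congr 1
    apply Finset.sum_congr rfl
    intro s _
    congr 1
    exact reward_marginal hN r (π t) (fun x μ h => hπpmf t x μ h) s
  have hVMF : vMFind γ r P π (emp x₀) = ∑' t, B t := rfl
  -- per-term bounds
  have hWnn : ∀ t s, 0 ≤ Wprocind P π x₀ t s := fun t => Wproc_nonneg hN P π x₀ hπpmf hP t
  have hWsum : ∀ t, ∑ s, Wprocind P π x₀ t s = 1 := Wproc_sum_one hN P π x₀ hπpmf hP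
  have hAbd : ∀ t, |A t| ≤ M_R * γ ^ t := by
    intro t
    rw [hA, abs_mul, abs_pow, abs_of_nonneg hγ0, mul_comm (M_R) (γ ^ t)]
    apply mul_le_mul_of_nonneg_left _ (by positivity)
    calc |∑ s : Fin N → X, Wprocind P π x₀ t s * rMFind r (emp s) (π t)|
        ≤ ∑ s : Fin N → X, |Wprocind P π x₀ t s * rMFind r (emp s) (π t)| :=
          Finset.abs_sum_le_sum_abs _ _
      _ ≤ ∑ s : Fin N → X, Wprocind P π x₀ t s * M_R := by
          apply Finset.sum_le_sum; intro s _
          rw [abs_mul, abs_of_nonneg (hWnn t s)]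
          exact mul_le_mul_of_nonneg_left
            (rMF_bound M_R r hbdd (emp s) (emp_isPmf hN s) (π t)
              (fun x => hπpmf t x _ (emp_isPmf hN s))) (hWnn t s)
      _ = M_R := by rw [← Finset.sum_mul, hWsum t, one_mul]
  have hBbd : ∀ t, |B t| ≤ M_R * γ ^ t := by
    intro t
    rw [hB, abs_mul, abs_pow, abs_of_nonneg hγ0, mul_comm (M_R) (γ ^ t)]
    exact mul_le_mul_of_nonneg_left
      (rMF_bound M_R r hbdd _ (hflowpmf t) (π t) (fun x => hπpmf t x _ (hflowpmf t)))
      (by positivity)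
  have hgeomγ : Summable (fun t : ℕ => γ ^ t) := summable_geometric_of_lt_one hγ0 hγ1
  have hgeomγSP : Summable (fun t : ℕ => (γ * S_P) ^ t) :=
    summable_geometric_of_lt_one hγSP0 hγSP
  have hAsum : Summable A := by
    apply Summable.of_abs
    exact Summable.of_nonneg_of_le (fun t => abs_nonneg _) hAbd (hgeomγ.mul_left M_R)
  have hBsum : Summable B := by
    apply Summable.of_abs
    exact Summable.of_nonneg_of_le (fun t => abs_nonneg _) hBbd (hgeomγ.mul_left M_R)
  -- the main per-term estimate
  have habs : ∀ t, |A t - B t|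
      ≤ (C_R * K' / (S_P - 1)) * ((γ * S_P) ^ t - γ ^ t) := by
    intro t
    have h5 : ∑ s : Fin N → X, Wprocind P π x₀ t s * rMFind r (emp s) (π t)
        - rMFind r (muFlowind P π (emp x₀) t) (π t)
        = ∑ s : Fin N → X, Wprocind P π x₀ t s
            * (rMFind r (emp s) (π t) - rMFind r (muFlowind P π (emp x₀) t) (π t)) := by
      simp_rw [mul_sub]
      rw [Finset.sum_sub_distrib, ← Finset.sum_mul, hWsum t, one_mul]
    have h6 : |∑ s : Fin N → X, Wprocind P π x₀ t s * rMFind r (emp s) (π t)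
        - rMFind r (muFlowind P π (emp x₀) t) (π t)|
        ≤ C_R * (K' * ((S_P ^ t - 1) / (S_P - 1))) := by
      rw [h5]
      calc |∑ s : Fin N → X, Wprocind P π x₀ t s
            * (rMFind r (emp s) (π t) - rMFind r (muFlowind P π (emp x₀) t) (π t))|
          ≤ ∑ s : Fin N → X, |Wprocind P π x₀ t s
            * (rMFind r (emp s) (π t) - rMFind r (muFlowind P π (emp x₀) t) (π t))| :=
            Finset.abs_sum_le_sum_abs _ _
        _ ≤ ∑ s : Fin N → X, Wprocind P π x₀ t s
            * (C_R * l1 (fun x => emp s x - muFlowind P π (emp x₀) t x)) := by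
            apply Finset.sum_le_sum; intro s _
            rw [abs_mul, abs_of_nonneg (hWnn t s)]
            apply mul_le_mul_of_nonneg_left _ (hWnn t s)
            calc |rMFind r (emp s) (π t) - rMFind r (muFlowind P π (emp x₀) t) (π t)|
                ≤ (L_R + M_R * L_Q + M_R)
                    * l1 (fun x => emp s x - muFlowind P π (emp x₀) t x) :=
                  rMF_lip M_R L_R L_Q hMR r hbdd hrLip (π t) (emp s)
                    (muFlowind P π (emp x₀) t) (emp_isPmf hN s) (hflowpmf t)
                    (fun x => hπpmf t x _ (emp_isPmf hN s))
                    (fun x => hπpmf t x _ (hflowpmf t))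
                    (fun x => hπLip t x _ _ (emp_isPmf hN s) (hflowpmf t))
              _ ≤ C_R * l1 (fun x => emp s x - muFlowind P π (emp x₀) t x) :=
                  mul_le_mul_of_nonneg_right hCR (l1_nonneg _)
        _ = C_R * ∑ s : Fin N → X, Wprocind P π x₀ t s
            * l1 (fun x => emp s x - muFlowind P π (emp x₀) t x) := by
            rw [Finset.mul_sum]
            exact Finset.sum_congr rfl fun s _ => by ring
        _ ≤ C_R * (K' * ((S_P ^ t - 1) / (S_P - 1))) := by
            apply mul_le_mul_of_nonneg_left _ hCR0
            exact err_rec hN L_P L_Q S_P hLP0 hLQ0 hSP_lb hSP1 P hP hPLip π hπpmf hπLip x₀ t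
    have h7 : A t - B t = γ ^ t * (∑ s : Fin N → X, Wprocind P π x₀ t s
        * rMFind r (emp s) (π t) - rMFind r (muFlowind P π (emp x₀) t) (π t)) := by
      rw [hA, hB]; ring
    rw [h7, abs_mul, abs_pow, abs_of_nonneg hγ0]
    calc γ ^ t * |∑ s : Fin N → X, Wprocind P π x₀ t s * rMFind r (emp s) (π t)
          - rMFind r (muFlowind P π (emp x₀) t) (π t)|
        ≤ γ ^ t * (C_R * (K' * ((S_P ^ t - 1) / (S_P - 1)))) :=
          mul_le_mul_of_nonneg_left h6 (by positivity)
      _ = (C_R * K' / (S_P - 1)) * ((γ * S_P) ^ t - γ ^ t) := by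
          rw [mul_pow]
          field_simp
  set g : ℕ → ℝ := fun t => (C_R * K' / (S_P - 1)) * ((γ * S_P) ^ t - γ ^ t) with hg
  have hgsumm : Summable g := ((hgeomγSP.sub hgeomγ).mul_left _)
  have habs_summ : Summable (fun t => |A t - B t|) :=
    Summable.of_nonneg_of_le (fun t => abs_nonneg _) habs hgsumm
  have htsum_g : ∑' t, g t = (C_R * K' / (S_P - 1))
      * (1 / (1 - γ * S_P) - 1 / (1 - γ)) := by
    rw [hg, tsum_mul_left]
    congr 1
    rw [Summable.tsum_sub hgeomγSP hgeomγ, tsum_geometric_of_lt_one hγSP0 hγSP,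
      tsum_geometric_of_lt_one hγ0 hγ1, one_div, one_div]
  calc |vMARLind γ r P π x₀ - vMFind γ r P π (emp x₀)|
      = |∑' t, (A t - B t)| := by
        rw [hVeq, hVMF, ← Summable.tsum_sub hAsum hBsum]
    _ ≤ ∑' t, |A t - B t| := by
        have := norm_tsum_le_tsum_norm (f := fun t => A t - B t)
          (by simpa [Real.norm_eq_abs] using habs_summ)
        simpa [Real.norm_eq_abs] using this
    _ ≤ ∑' t, g t := Summable.tsum_le_tsum habs habs_summ hgsumm
    _ = (C_R * K' / (S_P - 1)) * (1 / (1 - γ * S_P) - 1 / (1 - γ)) := htsum_g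
    _ = K' * (C_R / (S_P - 1)) * (1 / (1 - γ * S_P) - 1 / (1 - γ)) := by ring

end ValueDiff
/-- Main theorem (action-distribution-independent case): the localization of the optimal
mean-field policy sequence is near-optimal for the `N`-agent problem, with improved bound
`(2/(1−γ))M_R/√N + (√|X|/√N)·(4S_R/(S_P−1))·(1/(1−γS_P) − 1/(1−γ))`. -/
theorem main_theorem_action_independent
    {X U : Type*} [Fintype X] [Fintype U] [DecidableEq X] [DecidableEq U]
    (N : ℕ) (hN : 0 < N)
    (M_R L_R L_P L_Q γ : ℝ)
    (hMR : 0 < M_R) (hLR : 0 < L_R) (hLP : 0 < L_P) (hLQ : 0 < L_Q)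
    (hγ0 : 0 ≤ γ) (hγ1 : γ < 1)
    (hγSP : γ * ((1 + 2 * L_P) + L_Q * (1 + L_P)) < 1)
    (r : X → U → (X → ℝ) → ℝ)
    (hbdd : ∀ x u μ, IsPmf μ → |r x u μ| ≤ M_R)
    (hrLip : ∀ x u μ₁ μ₂, IsPmf μ₁ → IsPmf μ₂ →
      |r x u μ₁ - r x u μ₂| ≤ L_R * l1 (fun x' => μ₁ x' - μ₂ x'))
    (P : X → U → (X → ℝ) → X → ℝ)
    (hP : ∀ x u μ, IsPmf μ → IsPmf (P x u μ))
    (hPLip : ∀ x u μ₁ μ₂, IsPmf μ₁ → IsPmf μ₂ →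
      l1 (fun y => P x u μ₁ y - P x u μ₂ y) ≤ L_P * l1 (fun x' => μ₁ x' - μ₂ x'))
    (x₀ : Fin N → X) (μ₀ : X → ℝ) (hμ₀ : μ₀ = emp x₀)
    (Admissible : (ℕ → X → (X → ℝ) → U → ℝ) → Prop)
    (hAdm : ∀ π, Admissible π ↔
      ((∀ t x μ, IsPmf μ → IsPmf (π t x μ)) ∧
       (∀ t x μ₁ μ₂, IsPmf μ₁ → IsPmf μ₂ →
         l1 (fun u => π t x μ₁ u - π t x μ₂ u) ≤ L_Q * l1 (fun x' => μ₁ x' - μ₂ x'))))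
    (πMF πMARL : ℕ → X → (X → ℝ) → U → ℝ)
    (hπMF : Admissible πMF)
    (hπMFopt : ∀ π, Admissible π → vMFind γ r P π μ₀ ≤ vMFind γ r P πMF μ₀)
    (hπMARL : Admissible πMARL)
    (hπMARLopt : ∀ π, Admissible π → vMARLind γ r P π x₀ ≤ vMARLind γ r P πMARL x₀)
    (πtilde : ℕ → X → (X → ℝ) → U → ℝ)
    (hπtilde : ∀ t x μ, πtilde t x μ = πMF t x (muFlowind P πMF μ₀ t)) :
    |vMARLind γ r P πMARL x₀ - vMARLind γ r P πtilde x₀|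
      ≤ (2 / (1 - γ)) * (M_R / Real.sqrt N)
        + (Real.sqrt (Fintype.card X) / Real.sqrt N) *
            (4 * ((M_R + 2 * L_R) + L_Q * (M_R + L_R)) /
              (((1 + 2 * L_P) + L_Q * (1 + L_P)) - 1)) *
            (1 / (1 - γ * ((1 + 2 * L_P) + L_Q * (1 + L_P))) - 1 / (1 - γ)) := by
  subst hμ₀
  obtain ⟨hπMFpmf, hπMFlip⟩ := (hAdm πMF).mp hπMF
  obtain ⟨hπMApmf, hπMAlip⟩ := (hAdm πMARL).mp hπMARL
  have hμ₀pmf : IsPmf (emp x₀) := emp_isPmf hN x₀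
  have hflowpmf : ∀ t, IsPmf (muFlowind P πMF (emp x₀) t) :=
    muFlow_isPmf P πMF (emp x₀) hμ₀pmf hπMFpmf hP
  -- πtilde is admissible
  have hπtpmf : ∀ t x μ, IsPmf μ → IsPmf (πtilde t x μ) := by
    intro t x μ _
    rw [hπtilde]
    exact hπMFpmf t x _ (hflowpmf t)
  have hπtlip : ∀ t x (μ₁ μ₂ : X → ℝ), IsPmf μ₁ → IsPmf μ₂ →
      l1 (fun u => πtilde t x μ₁ u - πtilde t x μ₂ u)
        ≤ L_Q * l1 (fun x' => μ₁ x' - μ₂ x') := by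
    intro t x μ₁ μ₂ _ _
    have h0 : l1 (fun u => πtilde t x μ₁ u - πtilde t x μ₂ u) = 0 := by
      rw [show (fun u => πtilde t x μ₁ u - πtilde t x μ₂ u) = fun u => (0:ℝ) from by
        funext u
        rw [hπtilde, hπtilde, sub_self]]
      unfold l1
      simp
    rw [h0]
    exact mul_nonneg hLQ.le (l1_nonneg _)
  have htadm : Admissible πtilde := (hAdm πtilde).mpr ⟨hπtpmf, hπtlip⟩
  -- flows agree
  have hflow_eq : ∀ t, muFlowind P πtilde (emp x₀) t = muFlowind P πMF (emp x₀) t := by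
    intro t
    induction t with
    | zero => rfl
    | succ t ih =>
        show PMFind P (muFlowind P πtilde (emp x₀) t) (πtilde t)
          = PMFind P (muFlowind P πMF (emp x₀) t) (πMF t)
        rw [ih]
        unfold PMFind
        funext y
        apply Finset.sum_congr rfl
        intro x _
        apply Finset.sum_congr rfl
        intro u _
        rw [hπtilde]
  have hvMF_eq : vMFind γ r P πtilde (emp x₀) = vMFind γ r P πMF (emp x₀) := by
    unfold vMFind
    apply tsum_congr
    intro t
    congr 1
    rw [hflow_eq t]
    unfold rMFind
    apply Finset.sum_congr rfl
    intro x _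
    apply Finset.sum_congr rfl
    intro u _
    rw [hπtilde]
  have horder : vMARLind γ r P πtilde x₀ ≤ vMARLind γ r P πMARL x₀ := hπMARLopt πtilde htadm
  have hMFopt : vMFind γ r P πMARL (emp x₀) ≤ vMFind γ r P πMF (emp x₀) := hπMFopt πMARL hπMARL
  -- constants
  set S_P : ℝ := (1 + 2 * L_P) + L_Q * (1 + L_P) with hSPdef
  set S_R : ℝ := (M_R + 2 * L_R) + L_Q * (M_R + L_R) with hSRdef
  have hSP_lb : 1 + L_P + L_Q ≤ S_P := by rw [hSPdef]; nlinarith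
  have hSP1 : 1 < S_P := by rw [hSPdef]; nlinarith
  have hCR : L_R + M_R * L_Q + M_R ≤ S_R := by rw [hSRdef]; nlinarith
  have hCR0 : (0:ℝ) ≤ S_R := by rw [hSRdef]; nlinarith
  have hSPd : (0:ℝ) < S_P - 1 := by linarith
  set K' : ℝ := Real.sqrt (Fintype.card X) / Real.sqrt N with hK'
  have hK0 : 0 ≤ K' := by positivity
  set T : ℝ := 1 / (1 - γ * S_P) - 1 / (1 - γ) with hT
  have hγSPlt : γ * S_P < 1 := hγSP
  have h1γSP : (0:ℝ) < 1 - γ * S_P := by linarith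
  have h1γ : (0:ℝ) < 1 - γ := by linarith
  have hT0 : 0 ≤ T := by
    rw [hT]
    have : 1 - γ * S_P ≤ 1 - γ := by nlinarith
    have := one_div_le_one_div_of_le h1γSP this
    linarith
  -- the two value-difference bounds
  have d1 := value_diff hN M_R L_R L_P L_Q γ S_P S_R hMR.le hLP.le hLQ.le hγ0 hγ1
    hSP_lb hSP1 hγSPlt hCR hCR0 r hbdd hrLip P hP hPLip πMARL hπMApmf hπMAlip x₀
  have d2 := value_diff hN M_R L_R L_P L_Q γ S_P S_R hMR.le hLP.le hLQ.le hγ0 hγ1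
    hSP_lb hSP1 hγSPlt hCR hCR0 r hbdd hrLip P hP hPLip πtilde hπtpmf hπtlip x₀
  obtain ⟨d1l, d1r⟩ := abs_le.mp d1
  obtain ⟨d2l, d2r⟩ := abs_le.mp d2
  have habs : |vMARLind γ r P πMARL x₀ - vMARLind γ r P πtilde x₀|
      = vMARLind γ r P πMARL x₀ - vMARLind γ r P πtilde x₀ :=
    abs_of_nonneg (by linarith)
  rw [habs]
  have hmain : vMARLind γ r P πMARL x₀ - vMARLind γ r P πtilde x₀
      ≤ 2 * (K' * (S_R / (S_P - 1)) * T) := by linarith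
  have hfirst : 0 ≤ (2 / (1 - γ)) * (M_R / Real.sqrt N) :=
    mul_nonneg (div_nonneg (by norm_num) (by linarith))
      (div_nonneg hMR.le (Real.sqrt_nonneg _))
  have hsecond : 2 * (K' * (S_R / (S_P - 1)) * T) ≤ K' * (4 * S_R / (S_P - 1)) * T := by
    have hc : 2 * S_R / (S_P - 1) ≤ 4 * S_R / (S_P - 1) :=
      (div_le_div_iff_of_pos_right hSPd).mpr (by linarith)
    calc 2 * (K' * (S_R / (S_P - 1)) * T) = K' * (2 * S_R / (S_P - 1)) * T := by ring
      _ ≤ K' * (4 * S_R / (S_P - 1)) * T := by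
          apply mul_le_mul_of_nonneg_right _ hT0
          exact mul_le_mul_of_nonneg_left hc hK0
  linarith
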